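/- The group ℤ≀ℤ, with the word metric d from its canonical generating set, does not have Enflo type p for any p > 1. That is, for every p > 1 and every T > 0 there exist n ∈ ℕ and f : {−1,1}ⁿ → ℤ≀ℤ such that E[d(f(ε), f(−ε))^p] > T^p · Σ_{j=1}^n E[d(f(ε), f(ε^{(j)}))^p], where ε is uniform on {−1,1}ⁿ and ε^{(j)} is ε with its j-th coordinate flipped. -/

import Mathlib

open MeasureTheory ENNReal

/-- The word length distance on a group `G` associated to a generating set `S`. -/
noncomputable def wordDist {G : Type*} [Group G] (S : Set G) (x y : G) : ℕ :=
  sInf {n : ℕ | ∃ l : List G, l.length = n ∧ (∀ s ∈ l, s ∈ S) ∧ x⁻¹ * y = l.prod}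

/-- `S` is a symmetric generating set of `G`. -/
def IsSymmGenSet {G : Type*} [Group G] (S : Set G) : Prop :=
  (∀ s ∈ S, s⁻¹ ∈ S) ∧ Subgroup.closure S = ⊤

/-- There is a Lipschitz embedding of `(G, d)` into an `L_p` space with compression `α`. -/
def HasCompressionLp {G : Type*} (p : ℝ≥0∞) (d : G → G → ℕ) (α : ℝ) : Prop :=
  ∃ (Ω : Type) (_ : MeasurableSpace Ω) (μ : Measure Ω) (f : G → Lp ℝ p μ) (c C : ℝ),
    0 < c ∧ 0 < C ∧
      (∀ x y : G, x ≠ y → c * (d x y : ℝ) ^ α ≤ ‖f x - f y‖) ∧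
      (∀ x y : G, ‖f x - f y‖ ≤ C * (d x y : ℝ))

/-- The `L_p` compression exponent `α_p^*` of `(G, d)`; for `p = 2` this is the Hilbert
compression exponent `α^*`. -/
noncomputable def compressionExp {G : Type*} (p : ℝ≥0∞) (d : G → G → ℕ) : ℝ :=
  sSup {α : ℝ | 0 ≤ α ∧ HasCompressionLp p d α}
/-- The (restricted) wreath product `G ≀ H`: pairs `(f, x)` of a finitely supported function
`f : H → G` and an element `x ∈ H`, with product `(f,x)(g,y) = (z ↦ f(z)g(x⁻¹z), xy)`. -/
@[ext]
structure Wreath (G H : Type*) [One G] where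
  toFun : H → G
  pos : H
  finsupp : (Function.mulSupport toFun).Finite

namespace Wreath

variable {G H : Type*} [Group G] [Group H]

instance : One (Wreath G H) :=
  ⟨⟨fun _ => 1, 1, by
    have : Function.mulSupport (fun _ : H => (1 : G)) = ∅ :=
      Function.mulSupport_eq_empty_iff.mpr rfl
    rw [this]; exact Set.finite_empty⟩⟩

instance : Mul (Wreath G H) :=
  ⟨fun a b =>
    ⟨fun z => a.toFun z * b.toFun (a.pos⁻¹ * z), a.pos * b.pos, by
      have h2 : (Function.mulSupport fun z => b.toFun (a.pos⁻¹ * z)).Finite := by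
        have : (Function.mulSupport fun z => b.toFun (a.pos⁻¹ * z)) =
            (fun z : H => a.pos⁻¹ * z) ⁻¹' Function.mulSupport b.toFun :=
          Function.mulSupport_comp_eq_preimage _ _
        rw [this]
        exact b.finsupp.preimage (mul_right_injective a.pos⁻¹).injOn
      exact (a.finsupp.union h2).subset (Function.mulSupport_mul _ _)⟩⟩

instance : Inv (Wreath G H) :=
  ⟨fun a =>
    ⟨fun z => (a.toFun (a.pos * z))⁻¹, a.pos⁻¹, by
      have : (Function.mulSupport fun z => (a.toFun (a.pos * z))⁻¹) =
          (fun z : H => a.pos * z) ⁻¹' Function.mulSupport a.toFun := by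
        rw [show (fun z => (a.toFun (a.pos * z))⁻¹) = (fun z => a.toFun (a.pos * z))⁻¹ from rfl,
          Function.mulSupport_inv]
        exact Function.mulSupport_comp_eq_preimage _ _
      rw [this]
      exact a.finsupp.preimage (mul_right_injective a.pos).injOn⟩⟩

@[simp] lemma mul_toFun (a b : Wreath G H) :
    (a * b).toFun = fun z => a.toFun z * b.toFun (a.pos⁻¹ * z) := rfl

@[simp] lemma mul_pos' (a b : Wreath G H) : (a * b).pos = a.pos * b.pos := rfl

@[simp] lemma one_toFun : (1 : Wreath G H).toFun = fun _ => (1 : G) := rfl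

@[simp] lemma one_pos' : (1 : Wreath G H).pos = (1 : H) := rfl

@[simp] lemma inv_toFun (a : Wreath G H) :
    (a⁻¹).toFun = fun z => (a.toFun (a.pos * z))⁻¹ := rfl

@[simp] lemma inv_pos' (a : Wreath G H) : (a⁻¹).pos = a.pos⁻¹ := rfl

instance : Group (Wreath G H) where
  mul_assoc a b c := by
    refine Wreath.ext ?_ ?_
    · funext z; simp [mul_assoc, mul_inv_rev]
    · simp [mul_assoc]
  one_mul a := by
    refine Wreath.ext ?_ ?_
    · funext z; simp
    · simp
  mul_one a := by
    refine Wreath.ext ?_ ?_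
    · funext z; simp
    · simp
  inv_mul_cancel a := by
    refine Wreath.ext ?_ ?_
    · funext z; simp
    · simp

end Wreath

open Classical in
/-- The canonical generating set of the wreath product `G ≀ H` associated with a generating
set `S` of `G` and a generating set `T` of `H`: the elements `(𝟙, t)` for `t ∈ T` and
`(δ_s, e_H)` for `s ∈ S`, where `δ_s` takes the value `s` at `e_H` and `e_G` elsewhere. -/
noncomputable def wreathGens {G H : Type*} [Group G] [Group H] (S : Set G) (T : Set H) :
    Set (Wreath G H) :=
  {w | w.toFun = (fun _ => 1) ∧ w.pos ∈ T} ∪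
    {w | w.pos = 1 ∧ ∃ s ∈ S, w.toFun = fun z => if z = 1 then s else 1}

/-- The generating set `{±1}` of the (multiplicative) group of integers. -/
def zGens : Set (Multiplicative ℤ) :=
  {Multiplicative.ofAdd 1, Multiplicative.ofAdd (-1)}


/-!
Put the cursor at the origin and, for `i < n`, light lamp `i` to height `n` exactly when `ε i`
holds. Flipping `ε j` changes only lamp `j` by `n`, which costs at most `2j + n ≤ 3n` generators:
walk to `j`, toggle `n` times, walk back. Flipping every coordinate changes each of the `n` lamps
by `n`, while a single generator changes the total lamp height on positions `0, …, n-1` by at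
most one, so this costs at least `n²`. The two sides of the Enflo inequality therefore compare
as `T^p · n · (3n)^p` against `n^{2p}`, and the second wins for large `n` because `p > 1`.
-/

open scoped BigOperators

section WordDist

variable {G : Type*} [Group G] {S : Set G} {x y : G}

lemma wordDist_le_length {l : List G} (hl : ∀ s ∈ l, s ∈ S) (h : x⁻¹ * y = l.prod) :
    wordDist S x y ≤ l.length :=
  Nat.sInf_le ⟨l, rfl, hl, h⟩

lemma apply_mul_list_prod_le_add_length (Φ : G → ℕ) (hΦ : ∀ g, ∀ s ∈ S, Φ (g * s) ≤ Φ g + 1)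
    (g : G) {l : List G} (hl : ∀ s ∈ l, s ∈ S) : Φ (g * l.prod) ≤ Φ g + l.length := by
  induction l generalizing g with
  | nil => simp
  | cons s l ih =>
    have hs := hΦ g s (hl s (by simp))
    have := ih (g * s) fun t ht => hl t (by simp [ht])
    rw [List.prod_cons, ← mul_assoc, List.length_cons]
    omega

lemma le_wordDist_of_forall_mul_le (Φ : G → ℕ) (hΦ : ∀ g, ∀ s ∈ S, Φ (g * s) ≤ Φ g + 1)
    (hxy : x⁻¹ * y ∈ Submonoid.closure S) : Φ (x⁻¹ * y) ≤ Φ 1 + wordDist S x y := by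
  obtain ⟨l, hl, hprod⟩ := Submonoid.exists_list_of_mem_closure hxy
  obtain ⟨l', hlen, hl', hprod'⟩ := Nat.sInf_mem (s := {n | ∃ l : List G, l.length = n ∧
    (∀ s ∈ l, s ∈ S) ∧ x⁻¹ * y = l.prod}) ⟨l.length, l, rfl, hl, hprod.symm⟩
  rw [wordDist, ← hlen, hprod', ← one_mul l'.prod]
  exact apply_mul_list_prod_le_add_length Φ hΦ 1 hl'

end WordDist

namespace Wreath

variable {G H : Type*} [Group G] [Group H]

def shift : H →* Wreath G H where
  toFun x := ⟨1, x, by simp⟩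
  map_one' := rfl
  map_mul' x y := by ext <;> simp

lemma shift_mem_wreathGens {S : Set G} {T : Set H} {t : H} (ht : t ∈ T) :
    shift t ∈ wreathGens S T :=
  Or.inl ⟨rfl, ht⟩

noncomputable def base {ι : Type*} [Finite ι] (e : ι → H) : (ι → G) →* Wreath G H where
  toFun c := ⟨Function.extend e c 1, 1, (Set.finite_range e).subset
    (Function.mulSupport_extend_one_subset.trans (Set.image_subset_range _ _))⟩
  map_one' := Wreath.ext (Function.extend_one e) rfl
  map_mul' c c' := Wreath.ext (by
    funext z; simpa using congrFun (Function.extend_mul e c c' 1 1) z) (mul_one 1).symm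

section Lamp

variable [DecidableEq H]

def lamp (h : H) : G →* Wreath G H where
  toFun g := ⟨Pi.mulSingle h g, 1, (Set.finite_singleton h).subset Pi.mulSupport_mulSingle_subset⟩
  map_one' := by ext <;> simp
  map_mul' g g' := by ext <;> simp [Pi.mulSingle_mul]

lemma shift_mul_lamp_mul_shift_inv (x h : H) (g : G) :
    shift x * lamp h g * (shift x)⁻¹ = lamp (x * h) g := by
  ext z
  · simp [shift, lamp, Pi.mulSingle_apply, inv_mul_eq_iff_eq_mul]
  · simp [shift, lamp]

lemma lamp_one_mem_wreathGens {S : Set G} {T : Set H} {s : G} (hs : s ∈ S) :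
    lamp 1 s ∈ wreathGens S T := by
  refine Or.inr ⟨rfl, s, hs, ?_⟩
  funext z
  simp [lamp, Pi.mulSingle_apply]

lemma base_mulSingle {ι : Type*} [Finite ι] [DecidableEq ι] {e : ι → H} (he : e.Injective)
    (i : ι) (g : G) : base e (Pi.mulSingle i g) = lamp (e i) g := by
  ext z
  · by_cases hz : ∃ k, e k = z
    · obtain ⟨k, rfl⟩ := hz
      simp [base, lamp, he.extend_apply, Pi.mulSingle_apply, he.eq_iff]
    · have hne : z ≠ e i := fun h => hz ⟨i, h.symm⟩
      simp [base, lamp, Function.extend_apply' _ _ _ hz, hne]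
  · rfl

lemma base_eq_prod_ofFn {G : Type*} [CommGroup G] {n : ℕ} {e : Fin n → H} (he : e.Injective)
    (c : Fin n → G) : base e c = (List.ofFn fun i => lamp (e i) (c i)).prod := by
  conv_lhs => rw [← Finset.univ_prod_mulSingle c, ← List.prod_ofFn, map_list_prod, List.map_ofFn]
  simp only [Function.comp_def, base_mulSingle he]

end Lamp

section LampNorm

variable {ι : Type*} [Fintype ι]

def lampNorm (ℓ : G → ℕ) (e : ι → H) (w : Wreath G H) : ℕ :=
  ∑ i, ℓ (w.toFun (e i))

lemma lampNorm_one {ℓ : G → ℕ} (hℓ : ℓ 1 = 0) (e : ι → H) : lampNorm ℓ e 1 = 0 := by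
  simp [lampNorm, hℓ]

lemma lampNorm_base (ℓ : G → ℕ) {e : ι → H} (he : e.Injective) (c : ι → G) :
    lampNorm ℓ e (base e c) = ∑ i, ℓ (c i) := by
  simp [lampNorm, base, he.extend_apply]

/-- Right multiplication by a generator changes only the lamp under the cursor, and `e` meets
the cursor at most once. -/
lemma lampNorm_mul_le {S : Set G} {T : Set H} {ℓ : G → ℕ}
    (hℓ : ∀ g, ∀ s ∈ S, ℓ (g * s) ≤ ℓ g + 1) {e : ι → H} (he : e.Injective)
    (w u : Wreath G H) (hu : u ∈ wreathGens S T) :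
    lampNorm ℓ e (w * u) ≤ lampNorm ℓ e w + 1 := by
  classical
  have hpoint :
      ∀ i, ℓ ((w * u).toFun (e i)) ≤ ℓ (w.toFun (e i)) + if e i = w.pos then 1 else 0 := by
    intro i
    rcases hu with ⟨hf, -⟩ | ⟨-, s, hs, hf⟩
    · simp [hf]
    · by_cases hi : e i = w.pos
      · simpa [hf, hi] using hℓ _ s hs
      · simp [hf, hi, inv_mul_eq_one, Ne.symm hi]
  have hcard : (Finset.univ.filter fun i => e i = w.pos).card ≤ 1 :=
    Finset.card_le_one.mpr fun i hi k hk => he (by simp_all)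
  calc lampNorm ℓ e (w * u)
      ≤ ∑ i, (ℓ (w.toFun (e i)) + if e i = w.pos then 1 else 0) :=
        Finset.sum_le_sum fun i _ => hpoint i
    _ ≤ lampNorm ℓ e w + 1 := by
      rw [Finset.sum_add_distrib, Finset.sum_boole]
      simpa [lampNorm] using hcard

end LampNorm

end Wreath

lemma mul_sum_expect_lt_expect {α ι : Type*} [Fintype α] [Nonempty α] [Fintype ι]
    {c a b : ℝ} (hc : 0 ≤ c) {u : α → ι → ℝ} {v : α → ℝ} (hu : ∀ x i, u x i ≤ a)
    (hv : ∀ x, b ≤ v x) (hab : c * (Fintype.card ι * a) < b) :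
    c * ∑ i, 𝔼 x, u x i < 𝔼 x, v x :=
  calc c * ∑ i, 𝔼 x, u x i
      ≤ c * ∑ _i : ι, a := by
        gcongr with i
        exact Finset.expect_le Finset.univ_nonempty fun x _ => hu x i
    _ = c * (Fintype.card ι * a) := by simp
    _ < b := hab
    _ ≤ 𝔼 x, v x := Finset.le_expect Finset.univ_nonempty fun x _ => hv x

lemma exists_nat_mul_rpow_lt {p : ℝ} (hp : 1 < p) {T : ℝ} (hT : 0 ≤ T) :
    ∃ n : ℕ, T ^ p * (n * (3 * n) ^ p) < (n * n) ^ p := by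
  obtain ⟨n, hgrow, hn⟩ := (((tendsto_rpow_atTop (sub_pos.mpr hp)).comp
    tendsto_natCast_atTop_atTop).eventually_gt_atTop ((3 * T) ^ p)).and
    (Filter.eventually_gt_atTop 0) |>.exists
  refine ⟨n, ?_⟩
  have hn' : (0 : ℝ) < n := Nat.cast_pos.mpr hn
  have hsplit : (n : ℝ) ^ p = n ^ (p - 1) * n := by
    rw [Real.rpow_sub_one hn'.ne', div_mul_cancel₀ _ hn'.ne']
  calc T ^ p * (n * (3 * n) ^ p)
      = (3 * T) ^ p * n * n ^ p := by
        rw [Real.mul_rpow (by norm_num) hn'.le, Real.mul_rpow (by norm_num) hT]; ring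
    _ < n ^ (p - 1) * n * n ^ p := by
        gcongr
        exact hgrow
    _ = (n * n) ^ p := by rw [← hsplit, Real.mul_rpow hn'.le hn'.le]

namespace IntWreath

open Multiplicative Wreath

abbrev ZWrZ := Wreath (Multiplicative ℤ) (Multiplicative ℤ)

lemma natAbs_toAdd_mul_le (g s : Multiplicative ℤ) (hs : s ∈ zGens) :
    (toAdd (g * s)).natAbs ≤ (toAdd g).natAbs + 1 := by
  rcases hs with rfl | rfl <;> simp only [toAdd_mul, toAdd_ofAdd] <;> omega

/-- Walk to position `j`, toggle the lamp there `|toAdd g|` times, walk back. -/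
lemma exists_word_eq_lamp (j : ℕ) (g : Multiplicative ℤ) :
    ∃ l : List ZWrZ, l.length = 2 * j + (toAdd g).natAbs ∧
      (∀ u ∈ l, u ∈ wreathGens zGens zGens) ∧ l.prod = lamp (ofAdd (j : ℤ)) g := by
  obtain ⟨s, hs, hg⟩ : ∃ s ∈ zGens, g = s ^ (toAdd g).natAbs := by
    rcases Int.natAbs_eq (toAdd g) with h | h
    · exact ⟨ofAdd 1, Or.inl rfl, by rw [← ofAdd_nsmul, nsmul_eq_mul, mul_one, ← h]; rfl⟩
    · exact ⟨ofAdd (-1), Or.inr rfl, by rw [← ofAdd_nsmul, nsmul_eq_mul, mul_neg_one, ← h]; rfl⟩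
  refine ⟨.replicate j (shift (ofAdd 1)) ++ .replicate (toAdd g).natAbs (lamp 1 s) ++
    .replicate j (shift (ofAdd (-1))), by simp; ring, ?_, ?_⟩
  · simp only [List.mem_append, List.mem_replicate]
    rintro u ((⟨-, rfl⟩ | ⟨-, rfl⟩) | ⟨-, rfl⟩)
    · exact shift_mem_wreathGens (Or.inl rfl)
    · exact lamp_one_mem_wreathGens hs
    · exact shift_mem_wreathGens (Or.inr rfl)
  · have hj : ofAdd (1 : ℤ) ^ j = ofAdd (j : ℤ) := by rw [← ofAdd_nsmul]; simp
    simp only [List.prod_append, List.prod_replicate, ← map_pow, ← hg]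
    rw [ofAdd_neg, inv_pow, map_inv, hj, shift_mul_lamp_mul_shift_inv, mul_one]

lemma wordDist_le_of_inv_mul_eq_lamp {x y : ZWrZ} {j : ℕ} {g : Multiplicative ℤ}
    (h : x⁻¹ * y = lamp (ofAdd (j : ℤ)) g) :
    wordDist (wreathGens zGens zGens) x y ≤ 2 * j + (toAdd g).natAbs := by
  obtain ⟨l, hlen, hl, hprod⟩ := exists_word_eq_lamp j g
  exact hlen ▸ wordDist_le_length hl (h.trans hprod.symm)

lemma lamp_mem_closure (j : ℕ) (g : Multiplicative ℤ) :
    lamp (ofAdd (j : ℤ)) g ∈ Submonoid.closure (wreathGens zGens zGens) := by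
  obtain ⟨l, -, hl, hprod⟩ := exists_word_eq_lamp j g
  exact hprod ▸ Submonoid.list_prod_mem _ fun u hu => Submonoid.subset_closure (hl u hu)

def cubePos (n : ℕ) (i : Fin n) : Multiplicative ℤ := ofAdd (i : ℤ)

lemma cubePos_injective (n : ℕ) : (cubePos n).Injective := fun _ _ h =>
  Fin.ext <| by simpa [cubePos] using h

lemma base_cubePos_mem_closure {n : ℕ} (c : Fin n → Multiplicative ℤ) :
    base (cubePos n) c ∈ Submonoid.closure (wreathGens zGens zGens) := by
  rw [base_eq_prod_ofFn (cubePos_injective n)]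
  refine Submonoid.list_prod_mem _ fun u hu => ?_
  obtain ⟨i, rfl⟩ := List.mem_ofFn.mp hu
  exact lamp_mem_closure i (c i)

noncomputable def cubeMap (n : ℕ) (ε : Fin n → Bool) : ZWrZ :=
  base (cubePos n) fun i => ofAdd (if ε i then (n : ℤ) else 0)

lemma cubeMap_inv_mul_flip {n : ℕ} (ε : Fin n → Bool) (j : Fin n) :
    (cubeMap n ε)⁻¹ * cubeMap n (Function.update ε j (!ε j)) =
      lamp (ofAdd (j : ℤ)) (ofAdd (if ε j then -(n : ℤ) else n)) := by
  rw [cubeMap, cubeMap, ← map_inv, ← map_mul, ← cubePos, ← base_mulSingle (cubePos_injective n)]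
  congr 1
  funext i
  by_cases hi : i = j
  · subst hi; cases h : ε i <;> simp [h]
  · simp [hi]

lemma cubeMap_inv_mul_neg {n : ℕ} (ε : Fin n → Bool) :
    (cubeMap n ε)⁻¹ * cubeMap n (fun i => !ε i) =
      base (cubePos n) fun i => ofAdd (if ε i then -(n : ℤ) else n) := by
  rw [cubeMap, cubeMap, ← map_inv, ← map_mul]
  congr 1
  funext i
  cases h : ε i <;> simp [h]

lemma wordDist_cubeMap_flip_le {n : ℕ} (ε : Fin n → Bool) (j : Fin n) :
    wordDist (wreathGens zGens zGens) (cubeMap n ε) (cubeMap n (Function.update ε j (!ε j))) ≤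
      3 * n := by
  have hdist := wordDist_le_of_inv_mul_eq_lamp (cubeMap_inv_mul_flip ε j)
  have hheight : (toAdd (ofAdd (if ε j then -(n : ℤ) else n))).natAbs = n := by
    split_ifs <;> simp
  have hj := j.is_lt
  omega

lemma le_wordDist_cubeMap_neg {n : ℕ} (ε : Fin n → Bool) :
    n * n ≤ wordDist (wreathGens zGens zGens) (cubeMap n ε) (cubeMap n fun i => !ε i) := by
  have h := le_wordDist_of_forall_mul_le (lampNorm (fun g => (toAdd g).natAbs) (cubePos n))
    (lampNorm_mul_le natAbs_toAdd_mul_le (cubePos_injective n))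
    (cubeMap_inv_mul_neg ε ▸ base_cubePos_mem_closure _)
  rw [cubeMap_inv_mul_neg, lampNorm_base _ (cubePos_injective n), lampNorm_one (by simp)] at h
  simpa [apply_ite Int.natAbs] using h

end IntWreath

/-- `ℤ ≀ ℤ` (with the word metric `d` of its canonical generating set) does
not have Enflo type `p` for any `p > 1`: for every `p > 1` and `T > 0` there are `n` and
`f : {−1,1}ⁿ → ℤ ≀ ℤ` for which the Enflo type `p` inequality with constant `T` fails.
Here the hypercube `{−1,1}ⁿ` is modelled by `Fin n → Bool`, `ε` is uniform, and the `j`-th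
coordinate flip is `Function.update ε j (!ε j)`. -/
theorem wreath_ZZ_no_enflo_type :
    ∀ p : ℝ, 1 < p → ∀ T : ℝ, 0 < T →
      ∃ (n : ℕ) (f : (Fin n → Bool) → Wreath (Multiplicative ℤ) (Multiplicative ℤ)),
        T ^ p * ∑ j : Fin n, ((∑ ε : Fin n → Bool,
            (wordDist (wreathGens zGens zGens) (f ε)
              (f (Function.update ε j (!ε j))) : ℝ) ^ p) / 2 ^ n) <
        (∑ ε : Fin n → Bool,
            (wordDist (wreathGens zGens zGens) (f ε) (f (fun j => !ε j)) : ℝ) ^ p) / 2 ^ n := by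
  intro p hp T hT
  obtain ⟨n, hn⟩ := exists_nat_mul_rpow_lt hp hT.le
  refine ⟨n, IntWreath.cubeMap n, ?_⟩
  have hcard : (2 : ℝ) ^ n = Fintype.card (Fin n → Bool) := by simp
  have hp0 : 0 ≤ p := by linarith
  simp only [hcard, ← Fintype.expect_eq_sum_div_card]
  refine mul_sum_expect_lt_expect (a := (3 * n) ^ p) (b := (n * n) ^ p) (by positivity)
    (fun ε j => ?_) (fun ε => ?_) (by simpa using hn)
  · gcongr
    exact_mod_cast IntWreath.wordDist_cubeMap_flip_le ε j
  · gcongr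
    exact_mod_cast IntWreath.le_wordDist_cubeMap_neg ε
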